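/- Let ν be a probability measure on [0,∞)² with finite moments of all orders, and define its transform ν̂(n,m) = ∫ D(n,m;x,y) ν(dx dy) where D(n,m;x,y) = x^n y^m/((n+1)!(m+1)!). Then ν satisfies ∫ P f dν = ∫ f dν for every polynomial f on ℝ² (where P f(x,y) = ∫₀¹∫₀¹ f(x(1−u)+yv, y(1−v)+xu) du dv) if and only if ν̂ is harmonic for the dual generator, i.e. Σ_{k=0}^{n} Σ_{l=0}^{m} (1/((n+1)(m+1))) ν̂(n−k+l, m−l+k) = ν̂(n,m) for all n,m ∈ ℕ. -/

import Mathlib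

/-!
Expanding both coordinates of the exchanged pair binomially, the double integral defining `P`
factors into two Beta integrals `∫₀¹ uᵃ (1 - u)ᵇ du = a! b! / (a + b + 1)!`, which yields the
duality relation `P D(n,m;·)(x,y) = Σ_{k,l} D(n-k+l, m-l+k; x,y) / ((n+1)(m+1))`. Integrated
against `ν`, it says that harmonicity of `ν̂` at `(n,m)` is invariance `∫ P f dν = ∫ f dν` for the
monomial `f = xⁿ yᵐ`, and invariance on monomials extends to all polynomials by linearity.
-/

open MeasureTheory Finset

/-- The duality polynomial `D(n,m;x,y) = xⁿ yᵐ / ((n+1)! (m+1)!)`. -/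
noncomputable def dualityD (n m : ℕ) (x y : ℝ) : ℝ :=
  x ^ n * y ^ m / ((Nat.factorial (n + 1) : ℝ) * (Nat.factorial (m + 1) : ℝ))

open Nat

/-- Integration by parts: `x ^ (k + 1) * (1 - x) ^ (j + 1)` vanishes at both endpoints. -/
theorem integral_pow_mul_one_sub_pow_succ (k j : ℕ) :
    ((k : ℝ) + 1) * ∫ x in (0 : ℝ)..1, x ^ k * (1 - x) ^ (j + 1)
      = ((j : ℝ) + 1) * ∫ x in (0 : ℝ)..1, x ^ (k + 1) * (1 - x) ^ j := by
  have hderiv : ∀ x : ℝ, HasDerivAt (fun x => x ^ (k + 1) * (1 - x) ^ (j + 1))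
      (((k : ℝ) + 1) * (x ^ k * (1 - x) ^ (j + 1)) - ((j : ℝ) + 1) * (x ^ (k + 1) * (1 - x) ^ j))
      x := by
    intro x
    refine ((hasDerivAt_pow (k + 1) x).mul
      ((hasDerivAt_pow (j + 1) (1 - x)).comp x ((hasDerivAt_id x).const_sub 1))).congr_deriv ?_
    simp only [Nat.add_sub_cancel, Nat.cast_add, Nat.cast_one, Function.comp_apply]
    ring
  have hftc := intervalIntegral.integral_eq_sub_of_hasDerivAt (a := 0) (b := 1) (fun x _ => hderiv x)
    (Continuous.intervalIntegrable (by fun_prop) _ _)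
  rw [intervalIntegral.integral_sub (Continuous.intervalIntegrable (by fun_prop) _ _)
    (Continuous.intervalIntegrable (by fun_prop) _ _), intervalIntegral.integral_const_mul,
    intervalIntegral.integral_const_mul] at hftc
  simp only [one_pow, sub_self, zero_pow (succ_ne_zero _), mul_zero, sub_zero] at hftc
  linarith

theorem integral_pow_mul_one_sub_pow (k j : ℕ) :
    ∫ x in (0 : ℝ)..1, x ^ k * (1 - x) ^ j = (k ! * j ! / (k + j + 1)! : ℝ) := by
  induction j generalizing k with
  | zero =>
    simp only [pow_zero, mul_one, integral_pow, one_pow, zero_pow (succ_ne_zero k), sub_zero,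
      factorial_zero, add_zero, factorial_succ k, cast_mul, cast_one, cast_add]
    field_simp
  | succ j ih =>
    have hrec := integral_pow_mul_one_sub_pow_succ k j
    rw [ih, show k + 1 + j + 1 = k + (j + 1) + 1 by ring] at hrec
    rw [factorial_succ k, factorial_succ] at hrec
    rw [factorial_succ j, factorial_succ (k + (j + 1))]
    push_cast at hrec ⊢
    field_simp at hrec ⊢
    linarith

theorem intervalIntegral_intervalIntegral_sum_mul_mul {ι : Type*} (s : Finset ι) (c : ι → ℝ)
    {g h : ι → ℝ → ℝ} {a b a' b' : ℝ} {μ μ' : Measure ℝ}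
    (hg : ∀ i ∈ s, IntervalIntegrable (g i) μ a b)
    (hh : ∀ i ∈ s, IntervalIntegrable (h i) μ' a' b') :
    ∫ u in a..b, ∫ v in a'..b', ∑ i ∈ s, c i * (g i u * h i v) ∂μ' ∂μ
      = ∑ i ∈ s, c i * ((∫ u in a..b, g i u ∂μ) * ∫ v in a'..b', h i v ∂μ') := by
  have inner (u : ℝ) : ∫ v in a'..b', ∑ i ∈ s, c i * (g i u * h i v) ∂μ'
      = ∑ i ∈ s, c i * g i u * ∫ v in a'..b', h i v ∂μ' := by
    rw [intervalIntegral.integral_finsetSum fun i hi => ((hh i hi).const_mul (g i u)).const_mul _]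
    simp only [intervalIntegral.integral_const_mul, mul_assoc]
  simp only [inner]
  rw [intervalIntegral.integral_finsetSum fun i hi => ((hg i hi).const_mul _).mul_const _]
  simp only [intervalIntegral.integral_mul_const, intervalIntegral.integral_const_mul, mul_assoc]

namespace ImmediateExchange

noncomputable def transition (f : ℝ → ℝ → ℝ) (x y : ℝ) : ℝ :=
  ∫ u in (0 : ℝ)..1, ∫ v in (0 : ℝ)..1, f (x * (1 - u) + y * v) (y * (1 - v) + x * u)

theorem transition_const_mul (c : ℝ) (f : ℝ → ℝ → ℝ) (x y : ℝ) :
    transition (fun a b => c * f a b) x y = c * transition f x y := by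
  simp only [transition, intervalIntegral.integral_const_mul]

theorem transition_div_const (f : ℝ → ℝ → ℝ) (c x y : ℝ) :
    transition (fun a b => f a b / c) x y = transition f x y / c := by
  simp only [transition, intervalIntegral.integral_div]

theorem transition_finsetSum {ι : Type*} (s : Finset ι) {f : ι → ℝ → ℝ → ℝ}
    (hf : ∀ i ∈ s, Continuous (Function.uncurry (f i))) (x y : ℝ) :
    transition (fun a b => ∑ i ∈ s, f i a b) x y = ∑ i ∈ s, transition (f i) x y := by
  have hcont (i : ι) (hi : i ∈ s) : Continuous fun p : ℝ × ℝ =>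
      f i (x * (1 - p.1) + y * p.2) (y * (1 - p.2) + x * p.1) :=
    (hf i hi).comp₂ (by fun_prop) (by fun_prop)
  have inner (u : ℝ) : ∫ v in (0 : ℝ)..1, ∑ i ∈ s, f i (x * (1 - u) + y * v) (y * (1 - v) + x * u)
      = ∑ i ∈ s, ∫ v in (0 : ℝ)..1, f i (x * (1 - u) + y * v) (y * (1 - v) + x * u) :=
    intervalIntegral.integral_finsetSum fun i hi =>
      ((hcont i hi).comp (Continuous.prodMk_right u)).intervalIntegrable _ _
  simp only [transition, inner]
  exact intervalIntegral.integral_finsetSum fun i hi =>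
    (intervalIntegral.continuous_parametric_intervalIntegral_of_continuous' (hcont i hi) 0 1
      ).intervalIntegrable _ _

/-- `k` counts the factors `y v` taken from the first coordinate and `l` the factors `x u` taken
from the second: the jump `(n, m) → (n - k + l, m - l + k)` of the dual process. -/
theorem pow_mul_pow_eq_sum (n m : ℕ) (x y u v : ℝ) :
    (x * (1 - u) + y * v) ^ n * (y * (1 - v) + x * u) ^ m
      = ∑ kl ∈ range (n + 1) ×ˢ range (m + 1),
          (n.choose kl.1 * m.choose kl.2 * (x ^ (n - kl.1 + kl.2) * y ^ (m - kl.2 + kl.1)) : ℝ) *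
            ((u ^ kl.2 * (1 - u) ^ (n - kl.1)) * (v ^ kl.1 * (1 - v) ^ (m - kl.2))) := by
  rw [add_comm (x * (1 - u)), add_comm (y * (1 - v)), add_pow, add_pow, sum_mul_sum, sum_product]
  refine sum_congr rfl fun k _ => sum_congr rfl fun l _ => ?_
  simp only [mul_pow, pow_add]
  ring

theorem transition_monomial (n m : ℕ) (x y : ℝ) :
    transition (fun a b => a ^ n * b ^ m) x y
      = ∑ k ∈ range (n + 1), ∑ l ∈ range (m + 1),
          (n ! * m ! / ((n - k + l + 1)! * (m - l + k + 1)!) : ℝ) *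
            (x ^ (n - k + l) * y ^ (m - l + k)) := by
  simp only [transition, pow_mul_pow_eq_sum]
  rw [intervalIntegral_intervalIntegral_sum_mul_mul _ _
      (fun _ _ => Continuous.intervalIntegrable (by fun_prop) _ _)
      (fun _ _ => Continuous.intervalIntegrable (by fun_prop) _ _), sum_product]
  refine sum_congr rfl fun k hk => sum_congr rfl fun l hl => ?_
  have hn := choose_mul_factorial_mul_factorial (le_of_lt_succ (mem_range.1 hk))
  have hm := choose_mul_factorial_mul_factorial (le_of_lt_succ (mem_range.1 hl))
  rw [integral_pow_mul_one_sub_pow, integral_pow_mul_one_sub_pow, ← hn, ← hm,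
    add_comm l, add_comm k]
  push_cast
  field_simp

theorem dualityD_eq_div (n m : ℕ) :
    dualityD n m = fun a b => a ^ n * b ^ m / ((n + 1)! * (m + 1)! : ℝ) :=
  rfl

theorem transition_dualityD (n m : ℕ) (x y : ℝ) :
    transition (dualityD n m) x y
      = ∑ k ∈ range (n + 1), ∑ l ∈ range (m + 1),
          1 / (((n : ℝ) + 1) * ((m : ℝ) + 1)) * dualityD (n - k + l) (m - l + k) x y := by
  rw [dualityD_eq_div, transition_div_const, transition_monomial, sum_div]
  refine sum_congr rfl fun k _ => ?_
  rw [sum_div]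
  refine sum_congr rfl fun l _ => ?_
  simp only [dualityD, factorial_succ n, factorial_succ m]
  push_cast
  field_simp

theorem eval_vecCons_eq_sum (f : MvPolynomial (Fin 2) ℝ) (a b : ℝ) :
    MvPolynomial.eval ![a, b] f = ∑ d ∈ f.support, f.coeff d * (a ^ d 0 * b ^ d 1) := by
  simp only [MvPolynomial.eval_eq', Fin.prod_univ_two, Matrix.cons_val_zero, Matrix.cons_val_one,
    Matrix.cons_val_fin_one]

theorem transition_eval (f : MvPolynomial (Fin 2) ℝ) (x y : ℝ) :
    transition (fun a b => MvPolynomial.eval ![a, b] f) x y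
      = ∑ d ∈ f.support, f.coeff d * transition (fun a b => a ^ d 0 * b ^ d 1) x y := by
  simp only [eval_vecCons_eq_sum]
  rw [transition_finsetSum _ fun _ _ => by fun_prop]
  simp only [transition_const_mul]

section Moments

variable (ν : Measure (ℝ × ℝ))
  (hmom : ∀ n m : ℕ, Integrable (fun p : ℝ × ℝ => p.1 ^ n * p.2 ^ m) ν)
include hmom

theorem integral_eval_eq_sum (f : MvPolynomial (Fin 2) ℝ) :
    ∫ p, MvPolynomial.eval ![p.1, p.2] f ∂ν
      = ∑ d ∈ f.support, f.coeff d * ∫ p, p.1 ^ d 0 * p.2 ^ d 1 ∂ν := by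
  simp only [eval_vecCons_eq_sum]
  rw [integral_finsetSum _ fun d _ => (hmom _ _).const_mul _]
  simp only [integral_const_mul]

theorem integrable_transition_monomial (n m : ℕ) :
    Integrable (fun p : ℝ × ℝ => transition (fun a b => a ^ n * b ^ m) p.1 p.2) ν := by
  simp only [transition_monomial]
  exact integrable_finsetSum _ fun k _ => integrable_finsetSum _ fun l _ => (hmom _ _).const_mul _

theorem integral_transition_eval_eq_of_monomial
    (hinv : ∀ n m : ℕ, ∫ p, transition (fun a b => a ^ n * b ^ m) p.1 p.2 ∂ν
      = ∫ p, p.1 ^ n * p.2 ^ m ∂ν)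
    (f : MvPolynomial (Fin 2) ℝ) :
    ∫ p, transition (fun a b => MvPolynomial.eval ![a, b] f) p.1 p.2 ∂ν
      = ∫ p, MvPolynomial.eval ![p.1, p.2] f ∂ν := by
  simp only [transition_eval]
  rw [integral_finsetSum _ fun d _ => (integrable_transition_monomial ν hmom _ _).const_mul _,
    integral_eval_eq_sum ν hmom]
  simp only [integral_const_mul, hinv]

theorem integral_dualityD_transition_sum (n m : ℕ) :
    ∑ k ∈ range (n + 1), ∑ l ∈ range (m + 1),
        1 / (((n : ℝ) + 1) * ((m : ℝ) + 1)) * ∫ p, dualityD (n - k + l) (m - l + k) p.1 p.2 ∂ν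
      = ∫ p, transition (dualityD n m) p.1 p.2 ∂ν := by
  have hD (a b : ℕ) : Integrable (fun p : ℝ × ℝ => dualityD a b p.1 p.2) ν := (hmom a b).div_const _
  simp only [transition_dualityD]
  rw [integral_finsetSum _ fun k _ => integrable_finsetSum _ fun l _ => (hD _ _).const_mul _]
  refine sum_congr rfl fun k _ => ?_
  rw [integral_finsetSum _ fun l _ => (hD _ _).const_mul _]
  simp only [integral_const_mul]

theorem integral_transition_monomial_eq_iff (n m : ℕ) :
    ∫ p, transition (fun a b => a ^ n * b ^ m) p.1 p.2 ∂ν = ∫ p, p.1 ^ n * p.2 ^ m ∂ν ↔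
      ∑ k ∈ range (n + 1), ∑ l ∈ range (m + 1),
          1 / (((n : ℝ) + 1) * ((m : ℝ) + 1)) * ∫ p, dualityD (n - k + l) (m - l + k) p.1 p.2 ∂ν
        = ∫ p, dualityD n m p.1 p.2 ∂ν := by
  rw [integral_dualityD_transition_sum ν hmom, dualityD_eq_div]
  simp only [transition_div_const, integral_div]
  exact (div_left_inj' (by positivity)).symm

end Moments

end ImmediateExchange

open ImmediateExchange in
theorem immediate_exchange_invariant_iff_transform_harmonic_general
    (ν : Measure (ℝ × ℝ))
    (hmom : ∀ n m : ℕ, Integrable (fun p : ℝ × ℝ => p.1 ^ n * p.2 ^ m) ν) :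
    (∀ f : MvPolynomial (Fin 2) ℝ,
        (∫ p : ℝ × ℝ, (∫ u in (0:ℝ)..1, ∫ v in (0:ℝ)..1,
            MvPolynomial.eval ![p.1 * (1 - u) + p.2 * v, p.2 * (1 - v) + p.1 * u] f) ∂ν)
          = ∫ p : ℝ × ℝ, MvPolynomial.eval ![p.1, p.2] f ∂ν)
    ↔ (∀ n m : ℕ,
        ∑ k ∈ Finset.range (n + 1), ∑ l ∈ Finset.range (m + 1),
          (1 / (((n : ℝ) + 1) * ((m : ℝ) + 1))) *
            (∫ p : ℝ × ℝ, dualityD (n - k + l) (m - l + k) p.1 p.2 ∂ν)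
        = ∫ p : ℝ × ℝ, dualityD n m p.1 p.2 ∂ν) := by
  have hmono (n m : ℕ) := integral_transition_monomial_eq_iff ν hmom n m
  constructor
  · intro hinv n m
    rw [← hmono]
    have h := hinv (MvPolynomial.X 0 ^ n * MvPolynomial.X 1 ^ m)
    simp only [map_mul, map_pow, MvPolynomial.eval_X, Matrix.cons_val_zero, Matrix.cons_val_one,
      Matrix.cons_val_fin_one] at h
    exact h
  · intro hharm
    exact integral_transition_eval_eq_of_monomial ν hmom fun n m => (hmono n m).2 (hharm n m)

/-- A probability measure ν on [0,∞)² with finite moments of all orders is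
invariant for the transition operator `P` of the Immediate Exchange Model (in the sense that
`∫ P f dν = ∫ f dν` for every polynomial `f`) if and only if its transform
`ν̂(n,m) = ∫ D(n,m;x,y) ν(dx dy)` is harmonic for the dual generator. -/
theorem immediate_exchange_invariant_iff_transform_harmonic
    (ν : Measure (ℝ × ℝ)) [IsProbabilityMeasure ν]
    (hsupp : ν {p : ℝ × ℝ | p.1 < 0 ∨ p.2 < 0} = 0)
    (hmom : ∀ n m : ℕ, Integrable (fun p : ℝ × ℝ => p.1 ^ n * p.2 ^ m) ν) :
    (∀ f : MvPolynomial (Fin 2) ℝ,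
        (∫ p : ℝ × ℝ, (∫ u in (0:ℝ)..1, ∫ v in (0:ℝ)..1,
            MvPolynomial.eval ![p.1 * (1 - u) + p.2 * v, p.2 * (1 - v) + p.1 * u] f) ∂ν)
          = ∫ p : ℝ × ℝ, MvPolynomial.eval ![p.1, p.2] f ∂ν)
    ↔ (∀ n m : ℕ,
        ∑ k ∈ Finset.range (n + 1), ∑ l ∈ Finset.range (m + 1),
          (1 / (((n : ℝ) + 1) * ((m : ℝ) + 1))) *
            (∫ p : ℝ × ℝ, dualityD (n - k + l) (m - l + k) p.1 p.2 ∂ν)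
        = ∫ p : ℝ × ℝ, dualityD n m p.1 p.2 ∂ν) :=
  immediate_exchange_invariant_iff_transform_harmonic_general ν hmom
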